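/- Suppose S, C₋, C₊ all have real entries and Ω₋, Ω₊ are purely imaginary. Set ℂ_q = C₋ + C₊ and ℂ_p = C₋ − C₊ (real m×n matrices). Then for every s ∈ ℂ such that sI_{2n} − A, sI_n + i(Ω₋+Ω₊) + (1/2)ℂ_pᵀℂ_q, and sI_n + i(Ω₋−Ω₊) + (1/2)ℂ_qᵀℂ_p are all invertible, the transfer matrix is block diagonal: G_qp[s] = 0, G_pq[s] = 0, G_qq[s] = (I_m − ℂ_q (sI_n + i(Ω₋+Ω₊) + (1/2)ℂ_pᵀℂ_q)⁻¹ ℂ_pᵀ)·S, and G_pp[s] = (I_m − ℂ_p (sI_n + i(Ω₋−Ω₊) + (1/2)ℂ_qᵀℂ_p)⁻¹ ℂ_qᵀ)·S. In particular, bilateral BAE measurements of q_out with respect to p_in and of p_out with respect to q_in are realized. -/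
import Mathlib


open Matrix

noncomputable section

namespace LQS

/-- Entrywise real part, as a complex matrix. -/
def matRe {k l : ℕ} (X : Matrix (Fin k) (Fin l) ℂ) : Matrix (Fin k) (Fin l) ℂ :=
  fun i j => ((X i j).re : ℂ)

/-- Entrywise imaginary part, as a complex matrix. -/
def matIm {k l : ℕ} (X : Matrix (Fin k) (Fin l) ℂ) : Matrix (Fin k) (Fin l) ℂ :=
  fun i j => ((X i j).im : ℂ)

/-- A complex matrix has real entries. -/
def isReal {k l : ℕ} (X : Matrix (Fin k) (Fin l) ℂ) : Prop := ∀ i j, (X i j).im = 0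

/-- A complex matrix is purely imaginary (every entry has zero real part). -/
def isPurelyImag {k l : ℕ} (X : Matrix (Fin k) (Fin l) ℂ) : Prop := ∀ i j, (X i j).re = 0

/-- The symplectic matrix J_k = [[0, I],[−I, 0]]. -/
def Jmat (k : ℕ) : Matrix (Fin k ⊕ Fin k) (Fin k ⊕ Fin k) ℂ :=
  fromBlocks 0 1 (-1) 0

/-- D = [[Re S, −Im S],[Im S, Re S]]. -/
def quadD {m : ℕ} (S : Matrix (Fin m) (Fin m) ℂ) :
    Matrix (Fin m ⊕ Fin m) (Fin m ⊕ Fin m) ℂ :=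
  fromBlocks (matRe S) (-(matIm S)) (matIm S) (matRe S)

/-- C = [[Re(C₋+C₊), −Im(C₋−C₊)],[Im(C₋+C₊), Re(C₋−C₊)]]. -/
def quadC {m n : ℕ} (Cm Cp : Matrix (Fin m) (Fin n) ℂ) :
    Matrix (Fin m ⊕ Fin m) (Fin n ⊕ Fin n) ℂ :=
  fromBlocks (matRe (Cm + Cp)) (-(matIm (Cm - Cp))) (matIm (Cm + Cp)) (matRe (Cm - Cp))

/-- B = −[[Re((C₋−C₊)†), −Im((C₋−C₊)†)],[Im((C₋+C₊)†), Re((C₋+C₊)†)]]·D. -/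
def quadB {m n : ℕ} (S : Matrix (Fin m) (Fin m) ℂ) (Cm Cp : Matrix (Fin m) (Fin n) ℂ) :
    Matrix (Fin n ⊕ Fin n) (Fin m ⊕ Fin m) ℂ :=
  -(fromBlocks (matRe (Cm - Cp)ᴴ) (-(matIm (Cm - Cp)ᴴ))
      (matIm (Cm + Cp)ᴴ) (matRe (Cm + Cp)ᴴ)) * quadD S

/-- JH = [[Im(Ω₋+Ω₊), Re(Ω₋−Ω₊)],[−Re(Ω₋+Ω₊), Im(Ω₋−Ω₊)]]. -/
def quadJH {n : ℕ} (Om Op : Matrix (Fin n) (Fin n) ℂ) :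
    Matrix (Fin n ⊕ Fin n) (Fin n ⊕ Fin n) ℂ :=
  fromBlocks (matIm (Om + Op)) (matRe (Om - Op)) (-(matRe (Om + Op))) (matIm (Om - Op))

/-- C♯ = −J_n·Cᵀ·J_m. -/
def quadCsharp {m n : ℕ} (Cm Cp : Matrix (Fin m) (Fin n) ℂ) :
    Matrix (Fin n ⊕ Fin n) (Fin m ⊕ Fin m) ℂ :=
  -(Jmat n) * (quadC Cm Cp)ᵀ * (Jmat m)

/-- A = JH − (1/2)·C♯·C. -/
def quadA {m n : ℕ} (Cm Cp : Matrix (Fin m) (Fin n) ℂ) (Om Op : Matrix (Fin n) (Fin n) ℂ) :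
    Matrix (Fin n ⊕ Fin n) (Fin n ⊕ Fin n) ℂ :=
  quadJH Om Op - (1/2 : ℂ) • (quadCsharp Cm Cp * quadC Cm Cp)

/-- Transfer matrix G[s] = D + C(sI − A)⁻¹B. -/
def transferG {m n : ℕ} (S : Matrix (Fin m) (Fin m) ℂ) (Cm Cp : Matrix (Fin m) (Fin n) ℂ)
    (Om Op : Matrix (Fin n) (Fin n) ℂ) (s : ℂ) :
    Matrix (Fin m ⊕ Fin m) (Fin m ⊕ Fin m) ℂ :=
  quadD S + quadC Cm Cp *
    (s • (1 : Matrix (Fin n ⊕ Fin n) (Fin n ⊕ Fin n) ℂ) - quadA Cm Cp Om Op)⁻¹ *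
    quadB S Cm Cp

lemma matRe_real {k l : ℕ} {X : Matrix (Fin k) (Fin l) ℂ} (h : isReal X) : matRe X = X := by
  ext i j; exact Complex.ext (by simp [matRe]) (by simp [matRe, h i j])

lemma matIm_real {k l : ℕ} {X : Matrix (Fin k) (Fin l) ℂ} (h : isReal X) : matIm X = 0 := by
  ext i j; simp [matIm, h i j]

lemma matRe_imag {k l : ℕ} {X : Matrix (Fin k) (Fin l) ℂ} (h : isPurelyImag X) : matRe X = 0 := by
  ext i j; simp [matRe, h i j]

lemma matIm_imag {k l : ℕ} {X : Matrix (Fin k) (Fin l) ℂ} (h : isPurelyImag X) :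
    matIm X = (-Complex.I) • X := by
  ext i j
  simp [matIm, Complex.ext_iff, h i j]

lemma isReal_add {k l : ℕ} {X Y : Matrix (Fin k) (Fin l) ℂ} (hX : isReal X) (hY : isReal Y) :
    isReal (X + Y) := fun i j => by simp [hX i j, hY i j]

lemma isReal_sub {k l : ℕ} {X Y : Matrix (Fin k) (Fin l) ℂ} (hX : isReal X) (hY : isReal Y) :
    isReal (X - Y) := fun i j => by simp [hX i j, hY i j]

lemma isReal_CT {k l : ℕ} {X : Matrix (Fin k) (Fin l) ℂ} (hX : isReal X) : isReal Xᴴ :=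
  fun i j => by simp [conjTranspose_apply, hX j i]

lemma CT_eq_T {k l : ℕ} {X : Matrix (Fin k) (Fin l) ℂ} (hX : isReal X) : Xᴴ = Xᵀ := by
  ext i j
  simp only [conjTranspose_apply, transpose_apply]
  exact Complex.ext (by simp) (by simp [hX j i])

lemma isPurelyImag_add {k l : ℕ} {X Y : Matrix (Fin k) (Fin l) ℂ}
    (hX : isPurelyImag X) (hY : isPurelyImag Y) : isPurelyImag (X + Y) :=
  fun i j => by simp [hX i j, hY i j]

lemma isPurelyImag_sub {k l : ℕ} {X Y : Matrix (Fin k) (Fin l) ℂ}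
    (hX : isPurelyImag X) (hY : isPurelyImag Y) : isPurelyImag (X - Y) :=
  fun i j => by simp [hX i j, hY i j]

lemma blockDiag_inv {k : ℕ} {M₁ M₂ : Matrix (Fin k) (Fin k) ℂ}
    (h₁ : IsUnit M₁) (h₂ : IsUnit M₂) :
    (fromBlocks M₁ 0 0 M₂)⁻¹ = fromBlocks M₁⁻¹ 0 0 M₂⁻¹ := by
  apply inv_eq_right_inv
  rw [fromBlocks_multiply]
  simp [Matrix.mul_nonsing_inv _ ((Matrix.isUnit_iff_isUnit_det _).mp h₁),
        Matrix.mul_nonsing_inv _ ((Matrix.isUnit_iff_isUnit_det _).mp h₂),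
        fromBlocks_one]

lemma fromBlocks_sub {a b c d : Type*} {R : Type*} [SubtractionMonoid R]
    (A A' : Matrix a c R) (B B' : Matrix a d R) (C C' : Matrix b c R) (D D' : Matrix b d R) :
    fromBlocks A B C D - fromBlocks A' B' C' D' =
      fromBlocks (A - A') (B - B') (C - C') (D - D') := by
  ext i j; cases i <;> cases j <;> simp [fromBlocks]

end LQS

open LQS Matrix

/-- Bilateral BAE with real S, C₋, C₊ and purely imaginary Ω₋, Ω₊:
the transfer matrix is block diagonal with the explicit diagonal blocks. -/
theorem stmt_0 {m n : ℕ} (hm : 1 ≤ m) (hn : 1 ≤ n)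
    (S : Matrix (Fin m) (Fin m) ℂ) (Cm Cp : Matrix (Fin m) (Fin n) ℂ)
    (Om Op : Matrix (Fin n) (Fin n) ℂ)
    (hS : S ∈ Matrix.unitaryGroup (Fin m) ℂ)
    (hOmH : Omᴴ = Om) (hOpS : Opᵀ = Op)
    (hSre : isReal S) (hCmre : isReal Cm) (hCpre : isReal Cp)
    (hOmim : isPurelyImag Om) (hOpim : isPurelyImag Op) :
    ∀ s : ℂ,
      IsUnit (s • (1 : Matrix (Fin n ⊕ Fin n) (Fin n ⊕ Fin n) ℂ) - quadA Cm Cp Om Op) →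
      IsUnit (s • (1 : Matrix (Fin n) (Fin n) ℂ) + Complex.I • (Om + Op)
        + (1/2 : ℂ) • ((Cm - Cp)ᵀ * (Cm + Cp))) →
      IsUnit (s • (1 : Matrix (Fin n) (Fin n) ℂ) + Complex.I • (Om - Op)
        + (1/2 : ℂ) • ((Cm + Cp)ᵀ * (Cm - Cp))) →
      (transferG S Cm Cp Om Op s).toBlocks₁₂ = 0 ∧
      (transferG S Cm Cp Om Op s).toBlocks₂₁ = 0 ∧
      (transferG S Cm Cp Om Op s).toBlocks₁₁ =
        (1 - (Cm + Cp) * (s • (1 : Matrix (Fin n) (Fin n) ℂ) + Complex.I • (Om + Op)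
            + (1/2 : ℂ) • ((Cm - Cp)ᵀ * (Cm + Cp)))⁻¹ * (Cm - Cp)ᵀ) * S ∧
      (transferG S Cm Cp Om Op s).toBlocks₂₂ =
        (1 - (Cm - Cp) * (s • (1 : Matrix (Fin n) (Fin n) ℂ) + Complex.I • (Om - Op)
            + (1/2 : ℂ) • ((Cm + Cp)ᵀ * (Cm - Cp)))⁻¹ * (Cm + Cp)ᵀ) * S := by
  intro s hA h1 h2
  set Q : Matrix (Fin m) (Fin n) ℂ := Cm + Cp with hQdef
  set P : Matrix (Fin m) (Fin n) ℂ := Cm - Cp with hPdef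
  have hQ : isReal Q := isReal_add hCmre hCpre
  have hP : isReal P := isReal_sub hCmre hCpre
  set M₁ : Matrix (Fin n) (Fin n) ℂ :=
    s • (1 : Matrix (Fin n) (Fin n) ℂ) + Complex.I • (Om + Op) + (1/2 : ℂ) • (Pᵀ * Q) with hM₁
  set M₂ : Matrix (Fin n) (Fin n) ℂ :=
    s • (1 : Matrix (Fin n) (Fin n) ℂ) + Complex.I • (Om - Op) + (1/2 : ℂ) • (Qᵀ * P) with hM₂
  have hD : quadD S = fromBlocks S 0 0 S := by
    rw [quadD, matRe_real hSre, matIm_real hSre, neg_zero]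
  have hC : quadC Cm Cp = fromBlocks Q 0 0 P := by
    rw [quadC, matRe_real hQ, matIm_real hQ, matRe_real hP, matIm_real hP, neg_zero]
  have hB : quadB S Cm Cp = fromBlocks (-(Pᵀ * S)) 0 0 (-(Qᵀ * S)) := by
    rw [quadB, hD, matRe_real (isReal_CT hP), matIm_real (isReal_CT hP),
      matRe_real (isReal_CT hQ), matIm_real (isReal_CT hQ), CT_eq_T hP, CT_eq_T hQ,
      neg_zero, Matrix.neg_mul, fromBlocks_multiply]
    simp [fromBlocks_neg]
  have hCs : quadCsharp Cm Cp = fromBlocks Pᵀ 0 0 Qᵀ := by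
    rw [quadCsharp, hC, Jmat, fromBlocks_transpose, Matrix.neg_mul, Matrix.neg_mul,
      fromBlocks_multiply]
    simp [Jmat, fromBlocks_multiply, fromBlocks_neg]
  have hJH : quadJH Om Op =
      fromBlocks ((-Complex.I) • (Om + Op)) 0 0 ((-Complex.I) • (Om - Op)) := by
    rw [quadJH, matIm_imag (isPurelyImag_add hOmim hOpim),
      matIm_imag (isPurelyImag_sub hOmim hOpim), matRe_imag (isPurelyImag_add hOmim hOpim),
      matRe_imag (isPurelyImag_sub hOmim hOpim), neg_zero]
  have hresolv : s • (1 : Matrix (Fin n ⊕ Fin n) (Fin n ⊕ Fin n) ℂ) - quadA Cm Cp Om Op =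
      fromBlocks M₁ 0 0 M₂ := by
    have e1 : s • (1 : Matrix (Fin n) (Fin n) ℂ) -
        ((-Complex.I) • (Om + Op) - (1/2 : ℂ) • (Pᵀ * Q)) = M₁ := by rw [hM₁]; module
    have e2 : s • (1 : Matrix (Fin n) (Fin n) ℂ) -
        ((-Complex.I) • (Om - Op) - (1/2 : ℂ) • (Qᵀ * P)) = M₂ := by rw [hM₂]; module
    rw [quadA, hJH, hCs, hC, fromBlocks_multiply]
    simp only [Matrix.mul_zero, Matrix.zero_mul, add_zero, zero_add]
    rw [← fromBlocks_one, fromBlocks_smul, fromBlocks_smul, fromBlocks_sub, fromBlocks_sub]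
    simp only [smul_zero, sub_zero, zero_sub, neg_zero, sub_self]
    rw [e1, e2]
  rw [transferG, hD, hC, hB, hresolv, blockDiag_inv h1 h2, fromBlocks_multiply,
    fromBlocks_multiply, fromBlocks_add]
  refine ⟨?_, ?_, ?_, ?_⟩
  · simp
  · simp
  · simp only [toBlocks_fromBlocks₁₁, Matrix.mul_zero, Matrix.zero_mul, add_zero, zero_add]
    rw [sub_mul, one_mul, Matrix.mul_neg, sub_eq_add_neg]
    simp [Matrix.mul_assoc]
  · simp only [toBlocks_fromBlocks₂₂, Matrix.mul_zero, Matrix.zero_mul, add_zero, zero_add]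
    rw [sub_mul, one_mul, Matrix.mul_neg, sub_eq_add_neg]
    simp [Matrix.mul_assoc]
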